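/- arXiv:math/0610815 — 4 statements merged into one kernel-verified Lean document; each statement's English description precedes it below -/
import Mathlib

section
/- For every initial datum a⁰ in ℓ² with nonnegative components, there exists a global-in-time solution of the dyadic system da_j/dt = λ^{j-1} a_{j-1}² − λ^j a_j a_{j+1} + f_j (with a_{-1}=0, λ=2^{5/2}, f_0>0, f_j=0 for j≥1) on [0,∞), i.e., a function a: [0,∞) → ℓ² with each a_j in C¹ satisfying the ODEs. -/
/-!
Galerkin approximation and compactness. The system truncated to the shells `0, …, N` gains
energy only through the forcing, `d/dt ∑ a_j² = 2 f₀ a₀`, so its solutions obey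
`‖a(t)‖ ≤ ‖a⁰‖ + 1 + (|f₀| + 1) |t|` on `[-N, N]`. Clipping the state to a large box makes the
truncated field globally Lipschitz without changing these solutions, so Picard–Lindelöf provides
them. On a compact time interval every component and every right-hand side is then Lipschitz,
uniformly in large `N`. Along an ultrafilter the components converge pointwise; by Arzelà–Ascoli
the time derivatives converge uniformly on compact intervals, and the limit solves the dyadic
system for all real times.
-/

open Real Set MeasureTheory Finset Filter

noncomputable def lam : ℝ := (2:ℝ) ^ ((5:ℝ)/2)

/-- Right-hand side of the dyadic system: `da_j/dt = λ^{j-1} a_{j-1}² − λ^j a_j a_{j+1} + f_j`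
with `a_{-1}=0`, forcing `f_0 > 0`, `f_j = 0` for `j ≥ 1`. -/
noncomputable def dyadicRHS (f0 : ℝ) (a : ℕ → ℝ) : ℕ → ℝ
  | 0 => -(a 0 * a 1) + f0
  | (j+1) => lam ^ j * (a j)^2 - lam ^ (j+1) * a (j+1) * a (j+2)

/-- A weak (= classical) solution of the dyadic system on `[0,∞)`: an `ℓ²`-valued
function whose components are differentiable and satisfy the ODEs. -/
def IsDyadicSolution (f0 : ℝ) (a : ℝ → ℕ → ℝ) : Prop :=
  (∀ t ∈ Ici (0:ℝ), Summable (fun j => (a t j)^2)) ∧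
  (∀ j, ∀ t ∈ Ici (0:ℝ), HasDerivWithinAt (fun s => a s j) (dyadicRHS f0 (a t) j) (Ici 0) t)

open scoped NNReal Topology

lemma one_le_lam : 1 ≤ lam := Real.one_le_rpow one_le_two (by norm_num)

lemma lam_pow_nonneg (j : ℕ) : 0 ≤ lam ^ j := pow_nonneg (zero_le_one.trans one_le_lam) j

lemma abs_lam_pow_mul_sub_le {P Q M : ℝ} (j : ℕ) (hP : |P| ≤ M) (hQ : |Q| ≤ M) :
    |lam ^ j * P - lam ^ (j + 1) * Q| ≤ 2 * lam ^ (j + 1) * M := by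
  have hM : 0 ≤ M := (abs_nonneg P).trans hP
  have hj : lam ^ j ≤ lam ^ (j + 1) := pow_le_pow_right₀ one_le_lam j.le_succ
  calc |lam ^ j * P - lam ^ (j + 1) * Q| ≤ lam ^ j * |P| + lam ^ (j + 1) * |Q| := by
        simpa only [abs_mul, abs_of_nonneg (lam_pow_nonneg _)] using
          abs_sub (lam ^ j * P) (lam ^ (j + 1) * Q)
    _ ≤ lam ^ (j + 1) * M + lam ^ (j + 1) * M :=
        add_le_add (mul_le_mul hj hP (abs_nonneg _) (lam_pow_nonneg _))
          (mul_le_mul_of_nonneg_left hQ (lam_pow_nonneg _))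
    _ = 2 * lam ^ (j + 1) * M := by ring

section dyadicRHS

variable (f0 : ℝ) {x y : ℕ → ℝ} {j : ℕ} {b δ : ℝ}

lemma abs_dyadicRHS_le (hx : ∀ i ≤ j + 1, |x i| ≤ b) :
    |dyadicRHS f0 x j| ≤ 2 * lam ^ j * b ^ 2 + |f0| := by
  have hb : 0 ≤ b := (abs_nonneg _).trans (hx 0 (by omega))
  have hmul : ∀ p ≤ j + 1, ∀ q ≤ j + 1, |x p * x q| ≤ b ^ 2 := fun p hp q hq => by
    rw [abs_mul, sq]; exact mul_le_mul (hx p hp) (hx q hq) (abs_nonneg _) hb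
  cases j with
  | zero =>
    calc |-(x 0 * x 1) + f0| ≤ |x 0 * x 1| + |f0| := by simpa using abs_add_le (-(x 0 * x 1)) f0
      _ ≤ 2 * lam ^ 0 * b ^ 2 + |f0| := by
        have := hmul 0 (by omega) 1 (by omega); simp only [pow_zero]; nlinarith [sq_nonneg b]
  | succ j =>
    have h := abs_lam_pow_mul_sub_le j (hmul j (by omega) j (by omega))
      (hmul (j + 1) (by omega) (j + 2) (by omega))
    simp only [dyadicRHS, sq, mul_assoc] at h ⊢
    linarith [abs_nonneg f0]

lemma abs_dyadicRHS_sub_le (hx : ∀ i ≤ j + 1, |x i| ≤ b) (hy : ∀ i ≤ j + 1, |y i| ≤ b)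
    (hxy : ∀ i ≤ j + 1, |x i - y i| ≤ δ) :
    |dyadicRHS f0 x j - dyadicRHS f0 y j| ≤ 4 * lam ^ j * b * δ := by
  have hb : 0 ≤ b := (abs_nonneg _).trans (hx 0 (by omega))
  have hδ : 0 ≤ δ := (abs_nonneg _).trans (hxy 0 (by omega))
  have hmul : ∀ p ≤ j + 1, ∀ q ≤ j + 1, |x p * x q - y p * y q| ≤ 2 * b * δ := fun p hp q hq => by
    calc |x p * x q - y p * y q| = |x p * (x q - y q) + (x p - y p) * y q| := by ring_nf
      _ ≤ |x p| * |x q - y q| + |x p - y p| * |y q| := by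
        simpa only [abs_mul] using abs_add_le (x p * (x q - y q)) ((x p - y p) * y q)
      _ ≤ b * δ + δ * b := by
        gcongr
        exacts [hx p hp, hxy q hq, hxy p hp, hy q hq]
      _ = 2 * b * δ := by ring
  cases j with
  | zero =>
    have := hmul 0 (by omega) 1 (by omega)
    simp only [dyadicRHS, pow_zero]
    rw [show -(x 0 * x 1) + f0 - (-(y 0 * y 1) + f0) = -(x 0 * x 1 - y 0 * y 1) by ring, abs_neg]
    nlinarith [mul_nonneg hb hδ]
  | succ j =>
    have h := abs_lam_pow_mul_sub_le j (hmul j (by omega) j (by omega))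
      (hmul (j + 1) (by omega) (j + 2) (by omega))
    simp only [dyadicRHS]
    rw [show lam ^ j * x j ^ 2 - lam ^ (j + 1) * x (j + 1) * x (j + 2) -
        (lam ^ j * y j ^ 2 - lam ^ (j + 1) * y (j + 1) * y (j + 2)) =
        lam ^ j * (x j * x j - y j * y j) -
          lam ^ (j + 1) * (x (j + 1) * x (j + 2) - y (j + 1) * y (j + 2)) by ring]
    linarith

lemma continuous_dyadicRHS (j : ℕ) : Continuous fun x : ℕ → ℝ => dyadicRHS f0 x j := by
  cases j <;> simp only [dyadicRHS] <;> fun_prop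

lemma sum_mul_dyadicRHS (x : ℕ → ℝ) (N : ℕ) :
    ∑ j ∈ range (N + 1), x j * dyadicRHS f0 x j = f0 * x 0 - lam ^ N * x N ^ 2 * x (N + 1) := by
  induction N with
  | zero => simp [dyadicRHS]; ring
  | succ N ih => rw [sum_range_succ, ih]; simp only [dyadicRHS]; ring

end dyadicRHS

theorem exists_eq_forall_mem_Ioo_hasDerivAt_of_lipschitzWith {E : Type*} [NormedAddCommGroup E]
    [NormedSpace ℝ E] [CompleteSpace E] {F : E → E} {K : ℝ≥0} (hF : LipschitzWith K F) {C : ℝ}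
    (hC : ∀ x, ‖F x‖ ≤ C) (x₀ : E) {T : ℝ} (hT : 0 ≤ T) :
    ∃ u : ℝ → E, u 0 = x₀ ∧ ∀ t ∈ Ioo (-T) T, HasDerivAt u (F (u t)) t := by
  have hC0 : 0 ≤ C := (norm_nonneg _).trans (hC x₀)
  have hPL : IsPicardLindelof (fun _ => F) (⟨0, by constructor <;> linarith⟩ : Icc (-T) T) x₀
      (C * T).toNNReal 0 C.toNNReal K :=
    .of_time_independent (fun x _ => (hC x).trans (Real.le_coe_toNNReal C)) hF.lipschitzOnWith
      (by simp [Real.coe_toNNReal _ hC0, Real.coe_toNNReal _ (mul_nonneg hC0 hT)])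
  obtain ⟨u, hu0, hu⟩ := hPL.exists_eq_forall_mem_Icc_hasDerivWithinAt₀
  exact ⟨u, hu0, fun t ht => (hu t (Ioo_subset_Icc_self ht)).hasDerivAt (Icc_mem_nhds ht.1 ht.2)⟩

theorem le_sq_of_deriv_lt {g g' : ℝ → ℝ} {T c k : ℝ}
    (hg : ∀ t ∈ Icc 0 T, HasDerivAt g (g' t) t) (h0 : g 0 ≤ c ^ 2)
    (hbd : ∀ t ∈ Icc 0 T, g t = (c + k * t) ^ 2 → g' t < 2 * k * (c + k * t)) :
    ∀ t ∈ Icc 0 T, g t ≤ (c + k * t) ^ 2 :=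
  image_le_of_deriv_right_lt_deriv_boundary (B := fun t => (c + k * t) ^ 2)
    (fun s hs => (hg s hs).continuousAt.continuousWithinAt)
    (fun s hs => (hg s (Ico_subset_Icc_self hs)).hasDerivWithinAt) (by simpa using h0)
    (fun s => ((((hasDerivAt_id s).const_mul k).const_add c).fun_pow 2).congr_deriv
      (by simp only [id, mul_one]; ring))
    (fun s hs => hbd s (Ico_subset_Icc_self hs))

theorem le_sq_of_abs_deriv_lt {e e' : ℝ → ℝ} {T c k : ℝ}
    (he : ∀ t ∈ Icc (-T) T, HasDerivAt e (e' t) t) (h0 : e 0 ≤ c ^ 2)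
    (hbd : ∀ t ∈ Icc (-T) T, e t = (c + k * |t|) ^ 2 → |e' t| < 2 * k * (c + k * |t|)) :
    ∀ t ∈ Icc (-T) T, e t ≤ (c + k * |t|) ^ 2 := by
  have mem : ∀ s ∈ Icc 0 T, s ∈ Icc (-T) T ∧ -s ∈ Icc (-T) T := fun s hs =>
    ⟨⟨by linarith [hs.1, hs.2], hs.2⟩, ⟨by linarith [hs.2], by linarith [hs.1, hs.2]⟩⟩
  intro t ht
  rcases le_total 0 t with h | h
  · have hbd' : ∀ s ∈ Icc 0 T, e s = (c + k * s) ^ 2 → e' s < 2 * k * (c + k * s) :=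
      fun s hs hes => by
        have := hbd s (mem s hs).1 (by rwa [abs_of_nonneg hs.1])
        rw [abs_of_nonneg hs.1] at this
        exact (le_abs_self _).trans_lt this
    rw [abs_of_nonneg h]
    exact le_sq_of_deriv_lt (fun s hs => he s (mem s hs).1) h0 hbd' t ⟨h, ht.2⟩
  · have hbd' : ∀ s ∈ Icc 0 T, e (-s) = (c + k * s) ^ 2 → -e' (-s) < 2 * k * (c + k * s) :=
      fun s hs hes => by
        have := hbd (-s) (mem s hs).2 (by rwa [abs_neg, abs_of_nonneg hs.1])
        rw [abs_neg, abs_of_nonneg hs.1] at this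
        exact (neg_le_abs _).trans_lt this
    simpa only [neg_neg, abs_of_nonpos h] using le_sq_of_deriv_lt (g := fun s => e (-s))
      (fun s hs => ((he (-s) (mem s hs).2).comp s (hasDerivAt_neg s)).congr_deriv (mul_neg_one _))
      (by simpa using h0) hbd' (-t) ⟨by linarith, by linarith [ht.1]⟩

theorem tendstoUniformlyOn_of_eventually_lipschitzOnWith {ι X Y : Type*} [PseudoMetricSpace X]
    [SeminormedAddCommGroup Y] {l : Filter ι} {F : ι → X → Y} {f : X → Y} {K : ℝ≥0} {s : Set X}
    (hs : IsCompact s) (hF : ∀ᶠ i in l, LipschitzOnWith K (F i) s)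
    (hf : ∀ x ∈ s, Tendsto (F · x) l (𝓝 (f x))) : TendstoUniformlyOn F f l s := by
  classical
  -- Replacing the members that are not `K`-Lipschitz by `0` gives an equicontinuous family.
  set G : ι → X → Y := fun i => if LipschitzOnWith K (F i) s then F i else 0
  have hGF : ∀ᶠ i in l, EqOn (G i) (F i) s := hF.mono fun i hi => by simp [G, hi, EqOn]
  refine TendstoUniformlyOn.congr ?_ hGF
  have hG : ∀ i, LipschitzOnWith K (G i) s := fun i => by
    by_cases hi : LipschitzOnWith K (F i) s
    · simp only [G, hi, if_true]
    · simp only [G, hi, if_false]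
      exact (LipschitzWith.const (0 : Y)).lipschitzOnWith.weaken bot_le
  have : CompactSpace s := isCompact_iff_compactSpace.mp hs
  have hGeq : Equicontinuous fun i (x : s) => G i x :=
    (LipschitzWith.uniformEquicontinuous _ K fun i => (hG i).to_restrict).equicontinuous
  rw [tendstoUniformlyOn_iff_tendstoUniformly_comp_coe]
  exact UniformFun.tendsto_iff_tendstoUniformly.1 <| (hGeq.tendsto_uniformFun_iff_pi l _).2 <|
    tendsto_pi_nhds.2 fun x => (hf x x.2).congr' (hGF.mono fun i hi => (hi x.2).symm)

theorem exists_tendsto_of_eventually_abs_le {ι : Type*} (U : Ultrafilter ι) {x : ι → ℝ} {b : ℝ}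
    (h : ∀ᶠ i in U, |x i| ≤ b) : ∃ y, Tendsto x U (𝓝 y) := by
  obtain ⟨y, -, hy⟩ := isCompact_Icc.ultrafilter_le_nhds' (U.map x)
    (Ultrafilter.mem_map.2 (h.mono fun i hi => abs_le.1 hi))
  exact ⟨y, hy⟩

def clip (R y : ℝ) : ℝ := max (-R) (min R y)

lemma abs_clip_le {R : ℝ} (hR : 0 ≤ R) (y : ℝ) : |clip R y| ≤ R :=
  abs_le.2 ⟨le_max_left _ _, max_le (by linarith) (min_le_left _ _)⟩

lemma clip_of_abs_le {R y : ℝ} (h : |y| ≤ R) : clip R y = y := by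
  rw [clip, min_eq_right (abs_le.1 h).2, max_eq_right (abs_le.1 h).1]

lemma abs_clip_sub_clip_le (R y z : ℝ) : |clip R y - clip R z| ≤ |y - z| := by
  simp only [clip, max_comm (-R)]
  refine (abs_max_sub_max_le_abs _ _ _).trans ?_
  simpa using abs_min_sub_min_le_max R y R z

section extendByZero

variable {N : ℕ}

def extendByZero (x : Fin (N + 1) → ℝ) (i : ℕ) : ℝ := if h : i < N + 1 then x ⟨i, h⟩ else 0

lemma extendByZero_val (x : Fin (N + 1) → ℝ) (i : Fin (N + 1)) : extendByZero x i = x i := by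
  rw [extendByZero, dif_pos i.2]

lemma extendByZero_of_le {x : Fin (N + 1) → ℝ} {i : ℕ} (hi : N + 1 ≤ i) : extendByZero x i = 0 :=
  dif_neg hi.not_gt

lemma abs_extendByZero_sub_le (x y : Fin (N + 1) → ℝ) (i : ℕ) :
    |extendByZero x i - extendByZero y i| ≤ ‖x - y‖ := by
  unfold extendByZero
  split_ifs with h
  · simpa [Real.norm_eq_abs] using norm_le_pi_norm (x - y) ⟨i, h⟩
  · simp

lemma sum_range_sq_extendByZero_le (x : Fin (N + 1) → ℝ) (m : ℕ) :
    ∑ i ∈ range m, extendByZero x i ^ 2 ≤ ∑ i, x i ^ 2 :=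
  calc ∑ i ∈ range m, extendByZero x i ^ 2
      ≤ ∑ i ∈ range (max m (N + 1)), extendByZero x i ^ 2 :=
        sum_le_sum_of_subset_of_nonneg (range_subset_range.2 (le_max_left _ _))
          fun _ _ _ => sq_nonneg _
    _ = ∑ i ∈ range (N + 1), extendByZero x i ^ 2 :=
        (sum_subset (range_subset_range.2 (le_max_right _ _)) fun i _ hi => by
          rw [extendByZero_of_le (not_lt.1 (mem_range.not.1 hi)), sq, mul_zero]).symm
    _ = ∑ i, x i ^ 2 := by simp only [← Fin.sum_univ_eq_sum_range, extendByZero_val]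

lemma abs_extendByZero_le {x : Fin (N + 1) → ℝ} {b : ℝ} (hb : 0 ≤ b)
    (hx : ∑ i, x i ^ 2 ≤ b ^ 2) (i : ℕ) : |extendByZero x i| ≤ b := by
  refine abs_le_of_sq_le_sq ?_ hb
  calc extendByZero x i ^ 2 ≤ ∑ j ∈ range (i + 1), extendByZero x j ^ 2 :=
        single_le_sum (fun _ _ => sq_nonneg _) (self_mem_range_succ i)
    _ ≤ b ^ 2 := (sum_range_sq_extendByZero_le x _).trans hx

end extendByZero

noncomputable def galerkinField (f0 : ℝ) (N : ℕ) (R : ℝ) (x : Fin (N + 1) → ℝ) :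
    Fin (N + 1) → ℝ :=
  fun j => dyadicRHS f0 (fun i => clip R (extendByZero x i)) j

section galerkinField

variable (f0 : ℝ) {N : ℕ} {R : ℝ}

lemma norm_galerkinField_le (hR : 0 ≤ R) (x : Fin (N + 1) → ℝ) :
    ‖galerkinField f0 N R x‖ ≤ 2 * lam ^ N * R ^ 2 + |f0| := by
  refine (pi_norm_le_iff_of_nonneg (by positivity [lam_pow_nonneg N])).2 fun j => ?_
  rw [Real.norm_eq_abs]
  refine (abs_dyadicRHS_le f0 fun i _ => abs_clip_le hR _).trans ?_
  gcongr
  exacts [one_le_lam, Nat.lt_succ_iff.1 j.2]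

lemma lipschitzWith_galerkinField (hR : 0 ≤ R) :
    LipschitzWith (4 * lam ^ N * R).toNNReal (galerkinField f0 N R) := by
  refine LipschitzWith.of_dist_le' fun x y => ?_
  rw [dist_eq_norm, dist_eq_norm]
  refine (pi_norm_le_iff_of_nonneg (by positivity [lam_pow_nonneg N])).2 fun j => ?_
  rw [Real.norm_eq_abs, Pi.sub_apply]
  refine (abs_dyadicRHS_sub_le f0 (fun i _ => abs_clip_le hR _) (fun i _ => abs_clip_le hR _)
    fun i _ => (abs_clip_sub_clip_le R _ _).trans (abs_extendByZero_sub_le x y i)).trans ?_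
  gcongr
  exacts [one_le_lam, Nat.lt_succ_iff.1 j.2]

lemma galerkinField_apply_of_abs_le {x : Fin (N + 1) → ℝ} (hx : ∀ i, |extendByZero x i| ≤ R)
    (j : Fin (N + 1)) : galerkinField f0 N R x j = dyadicRHS f0 (extendByZero x) j := by
  simp only [galerkinField, clip_of_abs_le (hx _)]

lemma sum_mul_galerkinField_of_abs_le {x : Fin (N + 1) → ℝ} (hx : ∀ i, |extendByZero x i| ≤ R) :
    ∑ j, x j * galerkinField f0 N R x j = f0 * x 0 := by
  calc ∑ j, x j * galerkinField f0 N R x j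
      = ∑ j ∈ range (N + 1), extendByZero x j * dyadicRHS f0 (extendByZero x) j := by
        simp only [← Fin.sum_univ_eq_sum_range, extendByZero_val,
          galerkinField_apply_of_abs_le f0 hx]
    _ = f0 * x 0 := by
        rw [sum_mul_dyadicRHS, extendByZero_of_le le_rfl, mul_zero, sub_zero]
        exact congrArg (f0 * ·) (extendByZero_val x 0)

end galerkinField

theorem sum_sq_le_of_hasDerivAt_galerkinField {f0 c T R : ℝ} {N : ℕ} {x : ℝ → Fin (N + 1) → ℝ}
    (hc : 0 < c) (hR : c + (|f0| + 1) * T ≤ R)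
    (hx : ∀ t ∈ Icc (-T) T, HasDerivAt x (galerkinField f0 N R (x t)) t)
    (h0 : ∑ j, x 0 j ^ 2 ≤ c ^ 2) :
    ∀ t ∈ Icc (-T) T, ∑ j, x t j ^ 2 ≤ (c + (|f0| + 1) * |t|) ^ 2 := by
  refine le_sq_of_abs_deriv_lt (e' := fun t => 2 * ∑ j, x t j * galerkinField f0 N R (x t) j)
    (fun t ht => ?_) h0 fun t ht he => ?_
  · refine (HasDerivAt.fun_sum fun j _ => (hasDerivAt_pi.1 (hx t ht) j).fun_pow 2).congr_deriv ?_
    simp only [mul_sum]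
    exact sum_congr rfl fun j _ => by ring
  · have hB : 0 < c + (|f0| + 1) * |t| := by positivity
    have hBR : c + (|f0| + 1) * |t| ≤ R := hR.trans' <| by
      gcongr
      exact abs_le.2 ht
    have hbd := abs_extendByZero_le hB.le he.le
    simp only [sum_mul_galerkinField_of_abs_le f0 fun i => (hbd i).trans hBR]
    have h0 : |x t 0| ≤ c + (|f0| + 1) * |t| := by
      have := hbd ((0 : Fin (N + 1)) : ℕ)
      rwa [extendByZero_val] at this
    rw [abs_mul, abs_mul, abs_two]
    nlinarith [abs_nonneg f0, abs_nonneg (x t 0)]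

structure IsGalerkinApprox (f0 c k : ℝ) (N : ℕ) (u : ℝ → ℕ → ℝ) : Prop where
  sum_sq_le : ∀ t ∈ Icc (-(N : ℝ)) N, ∀ m, ∑ j ∈ range m, u t j ^ 2 ≤ (c + k * |t|) ^ 2
  hasDerivAt : ∀ j ≤ N, ∀ t ∈ Icc (-(N : ℝ)) N, HasDerivAt (u · j) (dyadicRHS f0 (u t) j) t

theorem exists_isGalerkinApprox (f0 : ℝ) {c : ℝ} (hc : 0 < c) (a0 : ℕ → ℝ) (N : ℕ)
    (ha0 : ∑ j ∈ range (N + 1), a0 j ^ 2 ≤ c ^ 2) :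
    ∃ u, IsGalerkinApprox f0 c (|f0| + 1) N u ∧ ∀ j, u 0 j = if j ≤ N then a0 j else 0 := by
  set R := c + (|f0| + 1) * N
  have hR : 0 ≤ R := by positivity
  obtain ⟨x, hx0, hx⟩ := exists_eq_forall_mem_Ioo_hasDerivAt_of_lipschitzWith
    (lipschitzWith_galerkinField f0 hR) (norm_galerkinField_le f0 hR) (fun i => a0 i)
    (T := N + 1) (by positivity)
  have hxN : ∀ t ∈ Icc (-(N : ℝ)) N, HasDerivAt x (galerkinField f0 N R (x t)) t :=
    fun t ht => hx t ⟨by linarith [ht.1], by linarith [ht.2]⟩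
  have henergy := sum_sq_le_of_hasDerivAt_galerkinField hc le_rfl hxN
    (by simpa only [hx0, Fin.sum_univ_eq_sum_range (fun i => a0 i ^ 2)] using ha0)
  refine ⟨fun t => extendByZero (x t), ⟨fun t ht m => ?_, fun j hj t ht => ?_⟩, fun j => ?_⟩
  · exact (sum_range_sq_extendByZero_le _ m).trans (henergy t ht)
  · have hbd := abs_extendByZero_le (by positivity) (henergy t ht)
    have hBR : c + (|f0| + 1) * |t| ≤ c + (|f0| + 1) * N := by
      gcongr
      exact abs_le.2 ht
    have h := hasDerivAt_pi.1 (hxN t ht) ⟨j, Nat.lt_succ_of_le hj⟩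
    rw [galerkinField_apply_of_abs_le f0 fun i => (hbd i).trans hBR] at h
    exact h.congr_of_eventuallyEq (.of_forall fun s => extendByZero_val (x s) ⟨j, _⟩)
  · simp only [extendByZero, hx0, Nat.lt_succ_iff, dite_eq_ite]

namespace IsGalerkinApprox

variable {f0 c k : ℝ} {N : ℕ} {u : ℝ → ℕ → ℝ}

lemma abs_apply_le (h : IsGalerkinApprox f0 c k N u) (hc : 0 ≤ c) (hk : 0 ≤ k) {T : ℝ}
    (hT : T ≤ N) {t : ℝ} (ht : t ∈ Icc (-T) T) (i : ℕ) : |u t i| ≤ c + k * T := by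
  have hT0 : 0 ≤ T := by linarith [ht.1, ht.2]
  refine abs_le_of_sq_le_sq ((single_le_sum (fun j _ => sq_nonneg (u t j))
    (self_mem_range_succ i)).trans ((h.sum_sq_le t ?_ (i + 1)).trans ?_)) (by positivity)
  · exact Icc_subset_Icc (neg_le_neg hT) hT ht
  · gcongr
    exact abs_le.2 ht

lemma abs_apply_sub_le (h : IsGalerkinApprox f0 c k N u) (hc : 0 ≤ c) (hk : 0 ≤ k) {T : ℝ}
    (hT : T ≤ N) {i : ℕ} (hi : i ≤ N) {t s : ℝ} (ht : t ∈ Icc (-T) T) (hs : s ∈ Icc (-T) T) :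
    |u t i - u s i| ≤ (2 * lam ^ i * (c + k * T) ^ 2 + |f0|) * |t - s| :=
  Convex.norm_image_sub_le_of_norm_hasDerivWithin_le
    (fun r hr => (h.hasDerivAt i hi r (Icc_subset_Icc (neg_le_neg hT) hT hr)).hasDerivWithinAt)
    (fun _ hr => abs_dyadicRHS_le f0 fun i' _ => h.abs_apply_le hc hk hT hr i')
    (convex_Icc _ _) hs ht

lemma lipschitzOnWith_dyadicRHS (h : IsGalerkinApprox f0 c k N u) (hc : 0 ≤ c) (hk : 0 ≤ k)
    {T : ℝ} (hT : T ≤ N) {j : ℕ} (hj : j + 1 ≤ N) :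
    LipschitzOnWith
      (4 * lam ^ j * (c + k * T) * (2 * lam ^ (j + 1) * (c + k * T) ^ 2 + |f0|)).toNNReal
      (fun s => dyadicRHS f0 (u s) j) (Icc (-T) T) := by
  refine LipschitzOnWith.of_dist_le' fun t ht s hs => ?_
  rw [Real.dist_eq, Real.dist_eq, mul_assoc]
  refine abs_dyadicRHS_sub_le f0 (fun i _ => h.abs_apply_le hc hk hT ht i)
    (fun i _ => h.abs_apply_le hc hk hT hs i)
    fun i hi => (h.abs_apply_sub_le hc hk hT (hi.trans hj) ht hs).trans ?_
  gcongr
  exact one_le_lam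

end IsGalerkinApprox

section limit

variable {f0 c k : ℝ} {v : ℕ → ℝ → ℕ → ℝ} {a : ℝ → ℕ → ℝ} {l : Filter ℕ}

lemma sum_range_sq_le_of_tendsto (hl : l ≤ atTop) [l.NeBot]
    (hv : ∀ N, IsGalerkinApprox f0 c k N (v N))
    (hlim : ∀ t j, Tendsto (fun N => v N t j) l (𝓝 (a t j))) (t : ℝ) (m : ℕ) :
    ∑ j ∈ range m, a t j ^ 2 ≤ (c + k * |t|) ^ 2 :=
  le_of_tendsto (tendsto_finsetSum _ fun j _ => (hlim t j).pow 2) <|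
    ((tendsto_natCast_atTop_atTop.eventually_ge_atTop |t|).filter_mono hl).mono fun N hN =>
      (hv N).sum_sq_le t (abs_le.1 hN) m

theorem hasDerivAt_of_tendsto_isGalerkinApprox (hl : l ≤ atTop) [l.NeBot]
    (hv : ∀ N, IsGalerkinApprox f0 c k N (v N)) (hc : 0 ≤ c) (hk : 0 ≤ k)
    (hlim : ∀ t j, Tendsto (fun N => v N t j) l (𝓝 (a t j))) (j : ℕ) (t : ℝ) :
    HasDerivAt (fun s => a s j) (dyadicRHS f0 (a t) j) t := by
  set T := |t| + 1
  have hN : ∀ᶠ N : ℕ in l, T ≤ N ∧ j + 1 ≤ N :=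
    ((tendsto_natCast_atTop_atTop.eventually_ge_atTop T).and
      (eventually_ge_atTop (j + 1))).filter_mono hl
  have hunif : TendstoUniformlyOn (fun N s => dyadicRHS f0 (v N s) j)
      (fun s => dyadicRHS f0 (a s) j) l (Icc (-T) T) :=
    tendstoUniformlyOn_of_eventually_lipschitzOnWith isCompact_Icc
      (hN.mono fun N hN => (hv N).lipschitzOnWith_dyadicRHS hc hk hN.1 hN.2)
      fun s _ => ((continuous_dyadicRHS f0 j).tendsto _).comp (tendsto_pi_nhds.2 (hlim s))
  refine hasDerivAt_of_tendstoUniformlyOn isOpen_Ioo (hunif.mono Ioo_subset_Icc_self)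
    (hN.mono fun N hN s hs => (hv N).hasDerivAt j (by omega) s ?_) (fun s _ => hlim s j) ?_
  · exact ⟨by linarith [hs.1, hN.1], by linarith [hs.2, hN.1]⟩
  · exact abs_lt.1 (lt_add_one |t|)

end limit

theorem global_existence_general (f0 : ℝ) (a0 : ℕ → ℝ)
    (ha0 : Summable (fun j => (a0 j)^2)) :
    ∃ a : ℝ → ℕ → ℝ, IsDyadicSolution f0 a ∧ ∀ j, a 0 j = a0 j := by
  set c := √(∑' j, a0 j ^ 2) + 1
  have hc : 0 < c := by positivity
  have hk : 0 ≤ |f0| + 1 := by positivity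
  have ha0c : ∀ N, ∑ j ∈ range (N + 1), a0 j ^ 2 ≤ c ^ 2 := fun N =>
    (ha0.sum_le_tsum _ fun j _ => sq_nonneg (a0 j)).trans <| by
      have h := Real.sq_sqrt (tsum_nonneg fun j => sq_nonneg (a0 j) : 0 ≤ ∑' j, a0 j ^ 2)
      nlinarith [Real.sqrt_nonneg (∑' j, a0 j ^ 2)]
  choose v hv hv0 using fun N => exists_isGalerkinApprox f0 hc a0 N (ha0c N)
  set U := Ultrafilter.of (atTop : Filter ℕ)
  have hU : (U : Filter ℕ) ≤ atTop := Ultrafilter.of_le _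
  have hlarge : ∀ r : ℝ, ∀ᶠ N : ℕ in U, r ≤ N :=
    fun r => (tendsto_natCast_atTop_atTop.eventually_ge_atTop r).filter_mono hU
  choose a ha using fun t j => exists_tendsto_of_eventually_abs_le U <|
    (hlarge |t|).mono fun N hN => (hv N).abs_apply_le hc.le hk hN (abs_le.1 le_rfl) j
  refine ⟨a, ⟨fun t _ => ?_, fun j t _ => ?_⟩, fun j => ?_⟩
  · exact summable_of_sum_range_le (fun _ => sq_nonneg _) (sum_range_sq_le_of_tendsto hU hv ha t)
  · exact (hasDerivAt_of_tendsto_isGalerkinApprox hU hv hc.le hk ha j t).hasDerivWithinAt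
  · refine tendsto_nhds_unique (ha 0 j) (tendsto_const_nhds.congr' ?_)
    filter_upwards [hlarge j] with N hN
    rw [hv0, if_pos (by exact_mod_cast hN)]

theorem global_existence (f0 : ℝ) (hf0 : 0 < f0) (a0 : ℕ → ℝ)
    (ha0 : Summable (fun j => (a0 j)^2)) (hpos : ∀ j, 0 ≤ a0 j) :
    ∃ a : ℝ → ℕ → ℝ, IsDyadicSolution f0 a ∧ ∀ j, a 0 j = a0 j :=
  global_existence_general f0 a0 ha0
end

section
/- If a(t) is a solution of the dyadic system with a_j(0) ≥ 0 for all j, then a_j(t) > 0 for all j and all t > 0. -/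
open Real Set MeasureTheory Finset Filter

/-!
Multiplying the equation for `a_j` by the integrating factor `exp (∫₀ᵗ λ^j a_{j+1})` removes the
loss term `λ^j a_j a_{j+1}`: the product then has derivative `(f_j + λ^{j-1} a_{j-1}²)` times a
positive factor. For `j = 0` this is `f₀ > 0`, and for `j ≥ 1` it is positive for `t > 0` once
`a_{j-1}` is, so by induction on `j` each product is strictly increasing from `a_j(0) ≥ 0`.
-/

/-- Extending `c` by `c t₀` to the left of `t₀` makes it continuous on `ℝ`. -/
theorem ContinuousOn.exists_hasDerivWithinAt_Ici {c : ℝ → ℝ} {t₀ : ℝ}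
    (hc : ContinuousOn c (Ici t₀)) :
    ∃ C : ℝ → ℝ, ∀ t ∈ Ici t₀, HasDerivWithinAt C (c t) (Ici t₀) t := by
  have hext : Continuous fun s => c (max s t₀) :=
    hc.comp_continuous (continuous_id.max continuous_const) fun s => le_max_right s t₀
  refine ⟨fun u => ∫ s in t₀..u, c (max s t₀), fun t ht => ?_⟩
  have hderiv := (hext.integral_hasStrictDerivAt t₀ t).hasDerivAt.hasDerivWithinAt (s := Ici t₀)
  rwa [max_eq_left (mem_Ici.mp ht)] at hderiv

theorem pos_of_hasDerivWithinAt_sub_mul {u c g : ℝ → ℝ} {t₀ : ℝ}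
    (hc : ContinuousOn c (Ici t₀))
    (hu : ∀ t ∈ Ici t₀, HasDerivWithinAt u (g t - c t * u t) (Ici t₀) t)
    (hg : ∀ t ∈ Ioi t₀, 0 < g t) (hu₀ : 0 ≤ u t₀) {t : ℝ} (ht : t₀ < t) : 0 < u t := by
  obtain ⟨C, hC⟩ := hc.exists_hasDerivWithinAt_Ici
  have hF : ∀ s ∈ Ici t₀,
      HasDerivWithinAt (fun s => u s * exp (C s)) (g s * exp (C s)) (Ici t₀) s :=
    fun s hs => ((hu s hs).mul (hC s hs).exp).congr_deriv (by ring)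
  have hmono : StrictMonoOn (fun s => u s * exp (C s)) (Ici t₀) := by
    refine strictMonoOn_of_hasDerivWithinAt_pos (f' := fun s => g s * exp (C s)) (convex_Ici t₀)
      (fun s hs => (hF s hs).continuousWithinAt) (fun s hs => ?_) (fun s hs => ?_)
    · exact (hF s (interior_subset hs)).mono interior_subset
    · rw [interior_Ici] at hs
      exact mul_pos (hg s hs) (exp_pos _)
  have hlt : u t₀ * exp (C t₀) < u t * exp (C t) := hmono self_mem_Ici (mem_Ici.mpr ht.le) ht
  exact pos_of_mul_pos_left ((mul_nonneg hu₀ (exp_pos _).le).trans_lt hlt) (exp_pos _).le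

lemma lam_pos : 0 < lam := by
  rw [lam]
  positivity

/-- The gain term `f_j + λ^{j-1} a_{j-1}²` of the `j`-th equation. -/
noncomputable def dyadicInflow (f0 : ℝ) (b : ℕ → ℝ) : ℕ → ℝ
  | 0 => f0
  | j + 1 => lam ^ j * b j ^ 2

lemma dyadicRHS_eq_inflow_sub (f0 : ℝ) (b : ℕ → ℝ) (j : ℕ) :
    dyadicRHS f0 b j = dyadicInflow f0 b j - lam ^ j * b (j + 1) * b j := by
  cases j <;> simp only [dyadicRHS, dyadicInflow] <;> ring

theorem IsDyadicSolution.pos_of_inflow_pos {f0 : ℝ} {a : ℝ → ℕ → ℝ}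
    (ha : IsDyadicSolution f0 a) {j : ℕ} (h0 : 0 ≤ a 0 j)
    (hin : ∀ t ∈ Ioi (0 : ℝ), 0 < dyadicInflow f0 (a t) j) {t : ℝ} (ht : 0 < t) :
    0 < a t j := by
  have hc : ContinuousOn (fun s => lam ^ j * a s (j + 1)) (Ici 0) :=
    continuousOn_const.mul fun s hs => (ha.2 (j + 1) s hs).continuousWithinAt
  refine pos_of_hasDerivWithinAt_sub_mul (u := fun s => a s j) hc (fun s hs => ?_) hin h0 ht
  rw [← dyadicRHS_eq_inflow_sub]
  exact ha.2 j s hs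

theorem solution_positivity (f0 : ℝ) (hf0 : 0 < f0) (a : ℝ → ℕ → ℝ)
    (ha : IsDyadicSolution f0 a) (h0 : ∀ j, 0 ≤ a 0 j) :
    ∀ j, ∀ t : ℝ, 0 < t → 0 < a t j := by
  intro j
  induction j with
  | zero => exact fun t => ha.pos_of_inflow_pos (h0 0) fun _ _ => hf0
  | succ j ih =>
    exact fun t => ha.pos_of_inflow_pos (h0 (j + 1)) fun s hs =>
      mul_pos (pow_pos lam_pos j) (pow_pos (ih s hs) 2)
end

section
/- Stability differential inequality: if a(t) solves the dyadic system with a_j(0) ≥ 0, b_j = a_j − λ^{−j/3}, and d_j defined by d_0 = λ^{−1/6} b_0, d_j = λ^{(j−1)/3}(λ^{1/6} b_j − λ^{−1/6} b_{j−1}), then for every k > 1 and t ≥ 0: (d/dt) Σ_{j=0}^k b_j(t)² ≤ −Σ_{j=0}^k d_j(t)² + d_{k+1}(t)². -/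
open Real Set MeasureTheory Finset Filter

/-- Deviation from the fixed point: `b_j = a_j − λ^{−j/3}`. -/
noncomputable def bvar (a : ℝ → ℕ → ℝ) (t : ℝ) (j : ℕ) : ℝ := a t j - lam ^ (-(j:ℝ)/3)

/-- Differenced variables: `d_0 = λ^{−1/6} b_0`, `d_j = λ^{(j−1)/3}(λ^{1/6} b_j − λ^{−1/6} b_{j−1})`. -/
noncomputable def dvar (a : ℝ → ℕ → ℝ) (t : ℝ) : ℕ → ℝ
  | 0 => lam ^ (-(1:ℝ)/6) * bvar a t 0
  | (i+1) => lam ^ ((i:ℝ)/3) * (lam ^ ((1:ℝ)/6) * bvar a t (i+1) - lam ^ (-(1:ℝ)/6) * bvar a t i)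

/-!
The derivative of `∑_{j ≤ k} b_j²` is `∑_{j ≤ k} 2 b_j ȧ_j`. Writing every power of `λ` as an
integer power of `μ = λ^{1/6}`, an induction on `k` shows that this sum equals
`−∑_{j ≤ k} d_j² + d_{k+1}² − μ^{4k+2} b_{k+1}² − 2 μ^{6k} b_k² a_{k+1}`, an exact identity
valid for any state. The two remainder terms are nonpositive as soon as `a_{k+1} ≥ 0`, and
positivity of the components is preserved by the flow: `ȧ_j ≥ −(λ^j a_{j+1}) a_j`, so `a_j`
times an integrating factor is nondecreasing.
-/

theorem nonneg_of_hasDerivWithinAt_of_neg_mul_le {f f' c : ℝ → ℝ} {t₀ : ℝ}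
    (hc : ContinuousOn c (Ici t₀))
    (hf : ∀ s ∈ Ici t₀, HasDerivWithinAt f (f' s) (Ici t₀) s)
    (hbound : ∀ s ∈ Ioi t₀, -(c s * f s) ≤ f' s) (h₀ : 0 ≤ f t₀) :
    ∀ t ∈ Ici t₀, 0 ≤ f t := by
  -- extend `c` continuously to the whole line to get a primitive from the fundamental theorem
  set c' : ℝ → ℝ := c ∘ fun s => max s t₀
  have hc' : Continuous c' :=
    hc.comp_continuous (continuous_id.max continuous_const) fun s => le_max_right s t₀
  set C : ℝ → ℝ := fun s => ∫ u in t₀..s, c' u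
  have hC : ∀ s, HasDerivAt C (c' s) s := fun s => (hc'.integral_hasStrictDerivAt t₀ s).hasDerivAt
  have hfc : ContinuousOn f (Ici t₀) := fun s hs => (hf s hs).continuousWithinAt
  have hmono : MonotoneOn (fun s => f s * exp (C s)) (Ici t₀) := by
    refine monotoneOn_of_hasDerivWithinAt_nonneg (f' := fun s => (f' s + c s * f s) * exp (C s))
      (convex_Ici t₀) ?_ ?_ ?_
    · exact hfc.mul (continuous_exp.comp
        (continuous_iff_continuousAt.2 fun s => (hC s).continuousAt)).continuousOn
    · rw [interior_Ici]
      intro s hs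
      have hcs : c' s = c s := by simp only [c', Function.comp, max_eq_left (mem_Ioi.1 hs).le]
      refine (((hf s (mem_Ioi.1 hs).le).mono Ioi_subset_Ici_self).mul
        (hC s).exp.hasDerivWithinAt).congr_deriv ?_
      rw [hcs]
      ring
    · rw [interior_Ici]
      intro s hs
      exact mul_nonneg (by linarith [hbound s hs]) (exp_pos _).le
  intro t ht
  have hle := hmono self_mem_Ici ht ht
  simp only [C, intervalIntegral.integral_same, exp_zero, mul_one] at hle
  exact nonneg_of_mul_nonneg_left (h₀.trans hle) (exp_pos _)

lemma dyadicRHS_add_mul_nonneg {f0 : ℝ} (hf0 : 0 ≤ f0) (x : ℕ → ℝ) (j : ℕ) :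
    0 ≤ dyadicRHS f0 x j + lam ^ j * x (j+1) * x j := by
  cases j with
  | zero => simp only [dyadicRHS]; linarith
  | succ i =>
    simp only [dyadicRHS]
    nlinarith [mul_nonneg (pow_nonneg lam_pos.le i) (sq_nonneg (x i))]

theorem IsDyadicSolution.nonneg {f0 : ℝ} {a : ℝ → ℕ → ℝ} (ha : IsDyadicSolution f0 a)
    (hf0 : 0 ≤ f0) (h0 : ∀ j, 0 ≤ a 0 j) (j : ℕ) : ∀ t ∈ Ici (0:ℝ), 0 ≤ a t j :=
  nonneg_of_hasDerivWithinAt_of_neg_mul_le (c := fun s => lam ^ j * a s (j+1))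
    (continuousOn_const.mul fun s hs => (ha.2 (j+1) s hs).continuousWithinAt)
    (ha.2 j) (fun s hs => by
      have := dyadicRHS_add_mul_nonneg hf0 (a s) j
      linarith)
    (h0 j)

noncomputable def mu : ℝ := lam ^ ((1:ℝ)/6)

lemma mu_pos : 0 < mu := rpow_pos_of_pos lam_pos _

lemma lam_rpow_eq_mu_pow {r : ℝ} {n : ℕ} (h : r = n / 6) : lam ^ r = mu ^ n := by
  rw [mu, ← rpow_natCast, ← rpow_mul lam_pos.le, h]
  ring_nf

lemma lam_rpow_eq_inv_mu_pow {r : ℝ} {n : ℕ} (h : r = -(n / 6)) : lam ^ r = (mu ^ n)⁻¹ := by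
  rw [h, rpow_neg lam_pos.le, lam_rpow_eq_mu_pow rfl]

lemma lam_pow_eq_mu_pow (j : ℕ) : lam ^ j = mu ^ (6 * j) := by
  rw [← rpow_natCast, lam_rpow_eq_mu_pow]
  push_cast
  ring

lemma bvar_eq (a : ℝ → ℕ → ℝ) (t : ℝ) (j : ℕ) : bvar a t j = a t j - (mu ^ (2 * j))⁻¹ := by
  rw [bvar, lam_rpow_eq_inv_mu_pow]
  push_cast
  ring

lemma dvar_zero_eq (a : ℝ → ℕ → ℝ) (t : ℝ) : dvar a t 0 = mu⁻¹ * bvar a t 0 := by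
  rw [dvar, lam_rpow_eq_inv_mu_pow (n := 1) (by norm_num), pow_one]

lemma dvar_succ_eq (a : ℝ → ℕ → ℝ) (t : ℝ) (i : ℕ) :
    dvar a t (i+1) = mu ^ (2 * i) * (mu * bvar a t (i+1) - mu⁻¹ * bvar a t i) := by
  rw [dvar, lam_rpow_eq_inv_mu_pow (r := -(1:ℝ)/6) (n := 1) (by norm_num),
    lam_rpow_eq_mu_pow (r := (i:ℝ)/3) (n := 2 * i) (by push_cast; ring),
    lam_rpow_eq_mu_pow (r := (1:ℝ)/6) (n := 1) (by norm_num), pow_one]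

lemma dyadicRHS_zero_eq (x : ℕ → ℝ) :
    dyadicRHS (lam ^ (-(1:ℝ)/3)) x 0 = -(x 0 * x 1) + (mu ^ 2)⁻¹ := by
  rw [dyadicRHS, lam_rpow_eq_inv_mu_pow (n := 2) (by norm_num)]

lemma dyadicRHS_succ_eq (f0 : ℝ) (x : ℕ → ℝ) (j : ℕ) :
    dyadicRHS f0 x (j+1) = mu ^ (6 * j) * x j ^ 2 - mu ^ (6 * j + 6) * x (j+1) * x (j+2) := by
  rw [dyadicRHS, lam_pow_eq_mu_pow, lam_pow_eq_mu_pow]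
  ring_nf

theorem sum_two_mul_bvar_mul_dyadicRHS (a : ℝ → ℕ → ℝ) (t : ℝ) (k : ℕ) :
    ∑ j ∈ range (k+1), 2 * bvar a t j * dyadicRHS (lam ^ (-(1:ℝ)/3)) (a t) j
      = -∑ j ∈ range (k+1), (dvar a t j)^2 + (dvar a t (k+1))^2
        - mu ^ (4 * k + 2) * (bvar a t (k+1))^2 - 2 * mu ^ (6 * k) * (bvar a t k)^2 * a t (k+1) := by
  have hmu := mu_pos.ne'
  induction k with
  | zero =>
    simp only [sum_range_succ, sum_range_zero, dyadicRHS_zero_eq, dvar_zero_eq, dvar_succ_eq,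
      bvar_eq]
    field_simp
    ring
  | succ k ih =>
    rw [sum_range_succ, ih, sum_range_succ (fun j => dvar a t j ^ 2) (k+1)]
    simp only [dyadicRHS_succ_eq, dvar_succ_eq, bvar_eq]
    field_simp
    ring

lemma hasDerivWithinAt_sum_sq_bvar {f0 : ℝ} {a : ℝ → ℕ → ℝ} (ha : IsDyadicSolution f0 a)
    (k : ℕ) {t : ℝ} (ht : t ∈ Ici (0:ℝ)) :
    HasDerivWithinAt (fun s => ∑ j ∈ range (k+1), (bvar a s j)^2)
      (∑ j ∈ range (k+1), 2 * bvar a t j * dyadicRHS f0 (a t) j) (Ici 0) t :=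
  HasDerivWithinAt.fun_sum fun j _ =>
    (((ha.2 j t ht).sub_const _).fun_pow 2).congr_deriv (by norm_num [bvar])

theorem stability_one (a : ℝ → ℕ → ℝ) (ha : IsDyadicSolution (lam ^ (-(1:ℝ)/3)) a)
    (h0 : ∀ j, 0 ≤ a 0 j) :
    ∀ k : ℕ, 1 < k → ∀ t ∈ Ici (0:ℝ), ∀ D : ℝ,
      HasDerivWithinAt (fun s => ∑ j ∈ Finset.range (k+1), (bvar a s j)^2) D (Ici 0) t →
      D ≤ -∑ j ∈ Finset.range (k+1), (dvar a t j)^2 + (dvar a t (k+1))^2 := by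
  intro k _ t ht D hD
  have hD_eq := (uniqueDiffOn_Ici 0 t ht).eq_deriv _ hD (hasDerivWithinAt_sum_sq_bvar ha k ht)
  have hpos : 0 ≤ a t (k+1) :=
    ha.nonneg (rpow_pos_of_pos lam_pos _).le h0 (k+1) t ht
  have hmu := mu_pos
  have hrem : 0 ≤ mu ^ (4 * k + 2) * (bvar a t (k+1))^2
      + 2 * mu ^ (6 * k) * (bvar a t k)^2 * a t (k+1) :=
    add_nonneg (by positivity) (mul_nonneg (by positivity) hpos)
  rw [hD_eq, sum_two_mul_bvar_mul_dyadicRHS]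
  linarith
end

section
/- Norm comparison via differenced variables: for any s < 5/6 there is a constant C_s such that for every sequence b with associated differenced sequence d (d_0 = λ^{−1/6} b_0, d_j = λ^{(j−1)/3}(λ^{1/6} b_j − λ^{−1/6} b_{j−1}), λ = 2^{5/2}), one has Σ_{j=0}^∞ 2^{2sj} b_j² ≤ C_s |d|², where C_s = 2^{5/6} Σ_{j=0}^∞ 2^{2j(s − 5/6)}(j+1) < ∞ and |d|² = Σ d_j². -/
theorem norm_comparison (s : ℝ) (hs : s < 5/6) :
    Summable (fun j : ℕ => (2:ℝ)^(2*(j:ℝ)*(s-5/6)) * ((j:ℝ)+1)) ∧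
    ∀ b d : ℕ → ℝ,
      d 0 = lam ^ (-(1:ℝ)/6) * b 0 →
      (∀ i, d (i+1) = lam ^ ((i:ℝ)/3) * (lam ^ ((1:ℝ)/6) * b (i+1) - lam ^ (-(1:ℝ)/6) * b i)) →
      Summable (fun j => (d j)^2) →
      Summable (fun j : ℕ => (2:ℝ)^(2*s*(j:ℝ)) * (b j)^2) ∧
      ∑' j : ℕ, (2:ℝ)^(2*s*(j:ℝ)) * (b j)^2
        ≤ ((2:ℝ)^((5:ℝ)/6) * ∑' j : ℕ, (2:ℝ)^(2*(j:ℝ)*(s-5/6)) * ((j:ℝ)+1)) * ∑' j, (d j)^2 := by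
  have h2 : (0:ℝ) < 2 := two_pos
  set r : ℝ := (2:ℝ) ^ (2*(s-5/6)) with hrdef
  have hr0 : 0 < r := Real.rpow_pos_of_pos h2 _
  have hr1 : r < 1 := by
    apply Real.rpow_lt_one_of_one_lt_of_neg one_lt_two; linarith
  have hrpow : ∀ j : ℕ, (2:ℝ)^(2*(j:ℝ)*(s-5/6)) = r^j := by
    intro j
    rw [hrdef, ← Real.rpow_natCast ((2:ℝ)^(2*(s-5/6))) j, ← Real.rpow_mul h2.le]
    ring_nf
  have hA : Summable (fun j : ℕ => (2:ℝ)^(2*(j:ℝ)*(s-5/6)) * ((j:ℝ)+1)) := by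
    have h1 : Summable (fun j : ℕ => (j:ℝ)^1 * r^j + r^j) :=
      (summable_pow_mul_geometric_of_norm_lt_one 1
        (by rw [Real.norm_eq_abs, abs_of_pos hr0]; exact hr1)).add
        (summable_geometric_of_lt_one hr0.le hr1)
    apply h1.congr
    intro j
    rw [hrpow j]; ring
  refine ⟨hA, ?_⟩
  intro b d hd0 hd1 hdsum
  have hlam : (0:ℝ) < lam := Real.rpow_pos_of_pos h2 _
  -- partial sums of d
  have hf : ∀ j : ℕ, ∑ i ∈ Finset.range (j+1), d i = lam ^ ((j:ℝ)/3 - 1/6) * b j := by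
    intro j
    induction j with
    | zero =>
      rw [Finset.sum_range_one, hd0]
      norm_num
    | succ n ih =>
      rw [Finset.sum_range_succ, ih, hd1 n, mul_sub, ← mul_assoc, ← mul_assoc,
        ← Real.rpow_add hlam, ← Real.rpow_add hlam]
      have e1 : (n:ℝ)/3 + 1/6 = ((n:ℕ)+1:ℝ)/3 - 1/6 := by ring
      have e2 : (n:ℝ)/3 + -1/6 = (n:ℝ)/3 - 1/6 := by ring
      rw [e1, e2]
      push_cast
      ring
  -- key pointwise bound
  have key : ∀ j : ℕ, (2:ℝ)^(2*s*(j:ℝ)) * (b j)^2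
      ≤ (2:ℝ)^((5:ℝ)/6) * ((2:ℝ)^(2*(j:ℝ)*(s-5/6)) * ((j:ℝ)+1)) * ∑' i, (d i)^2 := by
    intro j
    have hb : (b j)^2 = lam ^ ((1:ℝ)/3 - 2*(j:ℝ)/3) * (∑ i ∈ Finset.range (j+1), d i)^2 := by
      rw [hf j, mul_pow, ← Real.rpow_natCast (lam ^ ((j:ℝ)/3 - 1/6)) 2,
        ← Real.rpow_mul hlam.le, ← mul_assoc, ← Real.rpow_add hlam]
      have e : (1:ℝ)/3 - 2*(j:ℝ)/3 + ((j:ℝ)/3 - 1/6)*2 = 0 := by ring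
      push_cast
      rw [e, Real.rpow_zero, one_mul]
    have hcs : (∑ i ∈ Finset.range (j+1), d i)^2
        ≤ ((j:ℝ)+1) * ∑ i ∈ Finset.range (j+1), (d i)^2 := by
      have := sq_sum_le_card_mul_sum_sq (s := Finset.range (j+1)) (f := d)
      simpa using this
    have hsum_le : ∑ i ∈ Finset.range (j+1), (d i)^2 ≤ ∑' i, (d i)^2 :=
      Summable.sum_le_tsum _ (fun i _ => sq_nonneg _) hdsum
    have hcoef : (2:ℝ)^(2*s*(j:ℝ)) * lam ^ ((1:ℝ)/3 - 2*(j:ℝ)/3)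
        = (2:ℝ)^((5:ℝ)/6) * (2:ℝ)^(2*(j:ℝ)*(s-5/6)) := by
      rw [lam, ← Real.rpow_mul h2.le, ← Real.rpow_add h2, ← Real.rpow_add h2]
      ring_nf
    calc (2:ℝ)^(2*s*(j:ℝ)) * (b j)^2
        = ((2:ℝ)^((5:ℝ)/6) * (2:ℝ)^(2*(j:ℝ)*(s-5/6))) * (∑ i ∈ Finset.range (j+1), d i)^2 := by
          rw [hb, ← mul_assoc, hcoef]
      _ ≤ ((2:ℝ)^((5:ℝ)/6) * (2:ℝ)^(2*(j:ℝ)*(s-5/6))) * (((j:ℝ)+1) * ∑' i, (d i)^2) := by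
          apply mul_le_mul_of_nonneg_left _ (by positivity)
          exact hcs.trans (mul_le_mul_of_nonneg_left hsum_le (by positivity))
      _ = (2:ℝ)^((5:ℝ)/6) * ((2:ℝ)^(2*(j:ℝ)*(s-5/6)) * ((j:ℝ)+1)) * ∑' i, (d i)^2 := by ring
  have hmaj : Summable (fun j : ℕ =>
      (2:ℝ)^((5:ℝ)/6) * ((2:ℝ)^(2*(j:ℝ)*(s-5/6)) * ((j:ℝ)+1)) * ∑' i, (d i)^2) := by
    exact ((hA.mul_left _).mul_right _)
  have hbsum : Summable (fun j : ℕ => (2:ℝ)^(2*s*(j:ℝ)) * (b j)^2) := by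
    apply Summable.of_nonneg_of_le (fun j => by positivity) key hmaj
  refine ⟨hbsum, ?_⟩
  calc ∑' j : ℕ, (2:ℝ)^(2*s*(j:ℝ)) * (b j)^2
      ≤ ∑' j : ℕ, (2:ℝ)^((5:ℝ)/6) * ((2:ℝ)^(2*(j:ℝ)*(s-5/6)) * ((j:ℝ)+1)) * ∑' i, (d i)^2 :=
        Summable.tsum_le_tsum key hbsum hmaj
    _ = ((2:ℝ)^((5:ℝ)/6) * ∑' j : ℕ, (2:ℝ)^(2*(j:ℝ)*(s-5/6)) * ((j:ℝ)+1)) * ∑' j, (d j)^2 := by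
        rw [tsum_mul_right, tsum_mul_left]
end
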